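/- Let (A_j)_{j∈J} be a family of commutative rings, R = ∏_{j∈J} A_j their product, and r a natural number. Let M be a finitely presented R-module such that for every j ∈ J the base change A_j ⊗_R M of M along the projection R → A_j is a free A_j-module of rank r. Then M is a free R-module of rank r. -/

import Mathlib

/-!
Tensoring with a finitely presented module commutes with arbitrary products. Both
`M ↦ (∏ⱼ Nⱼ) ⊗ M` and `M ↦ ∏ⱼ (Nⱼ ⊗ M)` are right exact (a product of exact sequences is
exact), and the comparison map between them is an isomorphism for `M = Rⁿ`, where both sides are
`∏ⱼ Nⱼⁿ`. The five lemma, applied to a presentation `Rᵐ → Rⁿ → M → 0`, then makes it an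
isomorphism for `M`. For `R = ∏ⱼ Aⱼ` this gives `M ≅ ∏ⱼ (Aⱼ ⊗ M) ≅ ∏ⱼ Aⱼʳ ≅ Rʳ`.
-/

open scoped TensorProduct

/-- Each factor `A j` of a product ring is an algebra over the product via the projection. -/
noncomputable instance piEvalAlgebra {J : Type*} {A : J → Type*} [∀ j, CommRing (A j)]
    {j : J} : Algebra (∀ j', A j') (A j) :=
  (Pi.evalRingHom A j).toAlgebra

def LinearEquiv.piComm (R : Type*) [Semiring R] {ι κ : Type*} (φ : ι → κ → Type*)
    [∀ i k, AddCommMonoid (φ i k)] [∀ i k, Module R (φ i k)] :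
    (∀ i k, φ i k) ≃ₗ[R] ∀ k i, φ i k :=
  { Equiv.piComm φ with
    map_add' := fun _ _ => rfl
    map_smul' := fun _ _ => rfl }

theorem Function.Exact.piMap {R : Type*} [Semiring R] {J : Type*}
    {M N P : J → Type*} [∀ j, AddCommMonoid (M j)] [∀ j, AddCommMonoid (N j)]
    [∀ j, AddCommMonoid (P j)] [∀ j, Module R (M j)] [∀ j, Module R (N j)] [∀ j, Module R (P j)]
    {f : ∀ j, M j →ₗ[R] N j} {g : ∀ j, N j →ₗ[R] P j} (h : ∀ j, Function.Exact (f j) (g j)) :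
    Function.Exact (LinearMap.piMap f) (LinearMap.piMap g) := by
  intro y
  simp only [funext_iff, LinearMap.coe_piMap, Pi.map_apply, Pi.zero_apply, Set.mem_range]
  refine ⟨fun hy => ?_, ?_⟩
  · choose x hx using fun j => (h j (y j)).mp (hy j)
    exact ⟨x, hx⟩
  · rintro ⟨x, hx⟩ j
    exact (h j (y j)).mpr ⟨x j, hx j⟩

namespace TensorProduct

variable (R : Type*) [CommRing R] {J : Type*} (N : J → Type*) [∀ j, AddCommGroup (N j)]
  [∀ j, Module R (N j)] (M : Type*) [AddCommGroup M] [Module R M]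

def piLeftHom : (∀ j, N j) ⊗[R] M →ₗ[R] ∀ j, N j ⊗[R] M :=
  LinearMap.pi fun j => (LinearMap.proj j).rTensor M

variable {R N M} in
@[simp]
theorem piLeftHom_tmul (n : ∀ j, N j) (m : M) : piLeftHom R N M (n ⊗ₜ m) = fun j => n j ⊗ₜ m :=
  rfl

variable {M} in
theorem piMap_lTensor_comp_piLeftHom {M' : Type*} [AddCommGroup M'] [Module R M']
    (f : M →ₗ[R] M') :
    LinearMap.piMap (fun j => f.lTensor (N j)) ∘ₗ piLeftHom R N M =
      piLeftHom R N M' ∘ₗ f.lTensor (∀ j, N j) := by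
  ext n m
  simp

theorem piLeftHom_bijective_of_finite (ι : Type*) [Finite ι] :
    Function.Bijective (piLeftHom R N (ι → R)) := by
  cases nonempty_fintype ι
  classical
  let e₁ := piScalarRight R R (∀ j, N j) ι
  let e₂ := LinearEquiv.piCongrRight fun j => piScalarRight R R (N j) ι
  have h : piLeftHom R N (ι → R) = (e₁ ≪≫ₗ LinearEquiv.piComm R _ ≪≫ₗ e₂.symm).toLinearMap := by
    refine TensorProduct.ext' fun n x => ?_
    rw [LinearEquiv.coe_coe, LinearEquiv.trans_apply, LinearEquiv.trans_apply,
      LinearEquiv.eq_symm_apply]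
    ext j i
    simp [e₁, e₂, LinearEquiv.piComm, Function.swap]
  rw [h]
  exact LinearEquiv.bijective _

theorem piLeftHom_bijective [Module.FinitePresentation R M] :
    Function.Bijective (piLeftHom R N M) := by
  obtain ⟨n, m, π, g, hπ, hexact⟩ := Module.FinitePresentation.exists_fin' R M
  exact LinearMap.bijective_of_surjective_of_bijective_of_right_exact
    (g.lTensor _) (π.lTensor _) _ _ _ _ _
    (piMap_lTensor_comp_piLeftHom R N g) (piMap_lTensor_comp_piLeftHom R N π)
    (lTensor_exact _ hexact hπ)
    (Function.Exact.piMap fun j => lTensor_exact _ hexact hπ)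
    (piLeftHom_bijective_of_finite R N _).2 (piLeftHom_bijective_of_finite R N _)
    (LinearMap.lTensor_surjective _ hπ)
    (Function.Surjective.piMap fun j => LinearMap.lTensor_surjective _ hπ)

end TensorProduct

/-- A finitely presented module over a product of commutative rings all of whose base
changes to the factors are free of the same rank `r` is itself free of rank `r`. -/
theorem free_of_base_changes_free
    {J : Type*} (A : J → Type*) [∀ j, CommRing (A j)] (r : ℕ)
    (M : Type*) [AddCommGroup M] [Module (∀ j, A j) M]
    [Module.FinitePresentation (∀ j, A j) M]
    (hfree : ∀ j, Nonempty (((A j) ⊗[∀ j', A j'] M) ≃ₗ[A j] (Fin r → A j))) :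
    Nonempty (M ≃ₗ[∀ j, A j] (Fin r → ∀ j, A j)) := by
  let R := ∀ j, A j
  -- `lid` is stated for the regular module `R`, which is definitionally the product of the
  -- `R`-modules `A j` appearing in `piLeftHom`.
  let e : M ≃ₗ[R] ∀ j, A j ⊗[R] M := (TensorProduct.lid R M).symm ≪≫ₗ
    LinearEquiv.ofBijective _ (TensorProduct.piLeftHom_bijective R A M)
  exact ⟨e ≪≫ₗ LinearEquiv.piCongrRight (fun j => (hfree j).some.restrictScalars R) ≪≫ₗ
    LinearEquiv.piComm R _⟩
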